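/- Let D > 0, T > 0, let s : ℝ² × [0,∞) → [0,∞) and φ : {(τ,η) : 0 ≤ τ ≤ η} → [0,∞) be measurable, and define p(ρ,η) = ∫_0^η g_{√(2Dτ)}(ρ)·φ(τ,η) dτ and d_obs(r) = ∫_{ℝ²} ∫_0^T s(r−ρ, T−η)·p(ρ,η) dη dρ. Then for every r ∈ ℝ², d_obs(r) = ∫_0^{σ_max} (∫_{ℝ²} g_σ(r−ρ)·a(ρ,σ) dρ) dσ, where σ_max = √(2DT) and a(ρ,σ) = (σ/D)·∫_{σ²/(2D)}^T s(ρ, T−η)·φ(σ²/(2D), η) dη (equality holding in [0,∞]). -/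

import Mathlib

/-!
Reflecting `ρ ↦ r - ρ` puts the source in the form `s(ρ, T - η)`. Tonelli's theorem then moves
the free-motion time `τ` outermost, over the triangle `0 < τ ≤ η ≤ T`, and the substitution
`τ = σ² / (2D)` turns the Gaussian width `√(2Dτ)` into `σ`; its Jacobian `σ / D` is the
prefactor of the PSDR.
-/

open Real MeasureTheory Set ENNReal

/-- The 2D rotationally invariant Gaussian kernel
`g_σ(r) = (1/(2πσ²)) exp(−‖r‖²/(2σ²))`. -/
noncomputable def gauss2D (σ : ℝ) (r : ℝ × ℝ) : ℝ :=
  (1 / (2 * π * σ ^ 2)) * Real.exp (-(r.1 ^ 2 + r.2 ^ 2) / (2 * σ ^ 2))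

theorem gauss2D_nonneg (σ : ℝ) (r : ℝ × ℝ) : 0 ≤ gauss2D σ r := by
  unfold gauss2D
  positivity

theorem image_sq_div_Ioc_sqrt {D : ℝ} (hD : 0 < D) (b : ℝ) :
    (fun σ : ℝ => σ ^ 2 / (2 * D)) '' Ioc 0 √(2 * D * b) = Ioc 0 b := by
  ext τ
  constructor
  · rintro ⟨σ, ⟨hσ, hσb⟩, rfl⟩
    have hσ2 : σ ^ 2 ≤ 2 * D * b := (Real.le_sqrt' hσ).mp hσb
    exact ⟨by positivity, by rw [div_le_iff₀ (by positivity)]; linarith⟩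
  · rintro ⟨hτ, hτb⟩
    refine ⟨√(2 * D * τ), ⟨Real.sqrt_pos.2 (by positivity), Real.sqrt_le_sqrt (by nlinarith)⟩, ?_⟩
    show √(2 * D * τ) ^ 2 / (2 * D) = τ
    rw [Real.sq_sqrt (by positivity)]
    field_simp

theorem lintegral_Ioc_eq_lintegral_sq_div {D : ℝ} (hD : 0 < D) (b : ℝ) (h : ℝ → ℝ≥0∞) :
    ∫⁻ τ in Ioc 0 b, h τ =
      ∫⁻ σ in Ioc 0 √(2 * D * b), ENNReal.ofReal (σ / D) * h (σ ^ 2 / (2 * D)) := by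
  rw [← image_sq_div_Ioc_sqrt hD b]
  refine lintegral_image_eq_lintegral_deriv_mul_of_monotoneOn measurableSet_Ioc
    (fun σ _ => ?_) (fun x hx y _ hxy => ?_) h
  · exact ((hasDerivAt_pow 2 σ).div_const (2 * D)).hasDerivWithinAt.congr_deriv (by push_cast; ring)
  · have hx0 := hx.1.le
    show x ^ 2 / (2 * D) ≤ y ^ 2 / (2 * D)
    gcongr

theorem setLIntegral_setLIntegral_eq_lintegral_lintegral_indicator {α β : Type*}
    [MeasurableSpace α] [MeasurableSpace β] {μ : Measure α} {ν : Measure β}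
    {s : Set α} (hs : MeasurableSet s) {t : α → Set β} (ht : ∀ x, MeasurableSet (t x))
    (f : α → β → ℝ≥0∞) :
    ∫⁻ x in s, ∫⁻ y in t x, f x y ∂ν ∂μ =
      ∫⁻ x, ∫⁻ y,
        {p : α × β | p.1 ∈ s ∧ p.2 ∈ t p.1}.indicator (Function.uncurry f) (x, y) ∂ν ∂μ := by
  rw [← lintegral_indicator hs]
  refine lintegral_congr fun x => ?_
  by_cases hx : x ∈ s
  · rw [indicator_of_mem hx, ← lintegral_indicator (ht x)]
    refine lintegral_congr fun y => ?_
    by_cases hy : y ∈ t x <;> simp [hx, hy]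
  · simp [hx]

theorem lintegral_Ioc_lintegral_Ioc_swap {a b : ℝ} {f : ℝ → ℝ → ℝ≥0∞}
    (hf : Measurable (Function.uncurry f)) :
    ∫⁻ x in Ioc a b, ∫⁻ y in Ioc a x, f x y = ∫⁻ y in Ioc a b, ∫⁻ x in Ioc y b, f x y := by
  calc _ = ∫⁻ x in Ioc a b, ∫⁻ y in Ioo a x, f x y :=
        lintegral_congr fun x => (setLIntegral_congr Ioo_ae_eq_Ioc).symm
    _ = ∫⁻ y in Ioo a b, ∫⁻ x in Ioc y b, f x y := by
        rw [setLIntegral_setLIntegral_eq_lintegral_lintegral_indicator measurableSet_Ioc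
            (fun _ => measurableSet_Ioo),
          setLIntegral_setLIntegral_eq_lintegral_lintegral_indicator measurableSet_Ioo
            (fun _ => measurableSet_Ioc) fun y x => f x y,
          lintegral_lintegral_swap (f := fun x y => indicator _ (Function.uncurry f) (x, y))
            (hf.indicator (by measurability)).aemeasurable]
        refine lintegral_congr fun y => lintegral_congr fun x => ?_
        simp only [indicator_apply, mem_ofPred_eq, mem_Ioc, mem_Ioo, Function.uncurry_apply_pair]
        grind
    _ = _ := setLIntegral_congr Ioo_ae_eq_Ioc

theorem Measurable.setLIntegral_Ioc {α : Type*} [MeasurableSpace α] {ν : Measure ℝ} [SFinite ν]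
    {f : α → ℝ → ℝ≥0∞} (hf : Measurable (Function.uncurry f)) {g : α → ℝ} (hg : Measurable g)
    (b : ℝ) : Measurable fun x => ∫⁻ y in Ioc (g x) b, f x y ∂ν := by
  simp_rw [← lintegral_indicator measurableSet_Ioc]
  exact (hf.indicator (s := {p | p.2 ∈ Ioc (g p.1) b}) (by measurability)).lintegral_prod_right'
    (ν := ν)

section ObservationModel

variable {D T : ℝ} {s : ℝ × ℝ → ℝ → ℝ} {φ : ℝ → ℝ → ℝ}

noncomputable def observationIntegrand (D T : ℝ) (s : ℝ × ℝ → ℝ → ℝ) (φ : ℝ → ℝ → ℝ)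
    (r ρ : ℝ × ℝ) (η τ : ℝ) : ℝ≥0∞ :=
  ENNReal.ofReal (s ρ (T - η)) * ENNReal.ofReal (gauss2D √(2 * D * τ) (r - ρ) * φ τ η)

theorem measurable_observationIntegrand (hs : Measurable (Function.uncurry s))
    (hφ : Measurable (Function.uncurry φ)) (r : ℝ × ℝ) :
    Measurable (Function.uncurry fun (x : (ℝ × ℝ) × ℝ) η =>
      observationIntegrand D T s φ r x.1 η x.2) := by
  have hs' : Measurable fun q : ((ℝ × ℝ) × ℝ) × ℝ => s q.1.1 (T - q.2) :=
    hs.comp (measurable_fst.fst.prodMk (measurable_const.sub measurable_snd))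
  have hφ' : Measurable fun q : ((ℝ × ℝ) × ℝ) × ℝ => φ q.1.2 q.2 :=
    hφ.comp (measurable_fst.snd.prodMk measurable_snd)
  have hg : Measurable fun q : ((ℝ × ℝ) × ℝ) × ℝ => gauss2D √(2 * D * q.1.2) (r - q.1.1) := by
    unfold gauss2D
    fun_prop
  exact hs'.ennreal_ofReal.mul (hg.mul hφ').ennreal_ofReal

theorem lintegral_source_mul_green_eq (hs : Measurable (Function.uncurry s))
    (hφ : Measurable (Function.uncurry φ)) {p : ℝ × ℝ → ℝ → ℝ≥0∞}
    (hp : ∀ ρ η, p ρ η = ∫⁻ τ in Ioc 0 η, ENNReal.ofReal (gauss2D √(2 * D * τ) ρ * φ τ η))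
    (r ρ : ℝ × ℝ) :
    ∫⁻ η in Ioc 0 T, ENNReal.ofReal (s ρ (T - η)) * p (r - ρ) η =
      ∫⁻ τ in Ioc 0 T, ∫⁻ η in Ioc τ T, observationIntegrand D T s φ r ρ η τ := by
  simp_rw [hp, ← lintegral_const_mul' _ _ ofReal_ne_top]
  exact lintegral_Ioc_lintegral_Ioc_swap
    ((measurable_observationIntegrand hs hφ r).comp
      (f := fun q : ℝ × ℝ => ((ρ, q.2), q.1)) (by fun_prop))

theorem lintegral_observationIntegrand_sq_div (hD : 0 < D) (hs : ∀ ρ t, 0 ≤ s ρ t)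
    {a : ℝ × ℝ → ℝ → ℝ≥0∞}
    (ha : ∀ ρ σ, a ρ σ = ENNReal.ofReal (σ / D) *
      ∫⁻ η in Ioc (σ ^ 2 / (2 * D)) T, ENNReal.ofReal (s ρ (T - η) * φ (σ ^ 2 / (2 * D)) η))
    (r ρ : ℝ × ℝ) {σ : ℝ} (hσ : 0 ≤ σ) :
    ENNReal.ofReal (σ / D) *
        ∫⁻ η in Ioc (σ ^ 2 / (2 * D)) T, observationIntegrand D T s φ r ρ η (σ ^ 2 / (2 * D)) =
      ENNReal.ofReal (gauss2D σ (r - ρ)) * a ρ σ := by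
  have hsqrt : √(2 * D * (σ ^ 2 / (2 * D))) = σ := by
    rw [mul_div_cancel₀ _ (by positivity), Real.sqrt_sq hσ]
  rw [ha, mul_left_comm (ENNReal.ofReal (gauss2D σ (r - ρ)))]
  congr 1
  rw [← lintegral_const_mul' _ _ ofReal_ne_top]
  refine lintegral_congr fun η => ?_
  simp only [observationIntegrand, hsqrt, ENNReal.ofReal_mul (gauss2D_nonneg _ _),
    ENNReal.ofReal_mul (hs _ _)]
  ring

end ObservationModel

theorem observation_model_general (D T : ℝ) (hD : 0 < D)
    (s : ℝ × ℝ → ℝ → ℝ) (φ : ℝ → ℝ → ℝ)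
    (hs_meas : Measurable (Function.uncurry s)) (hφ_meas : Measurable (Function.uncurry φ))
    (hs_nonneg : ∀ ρ t, 0 ≤ s ρ t)
    -- the Green function of the surface density
    (p : ℝ × ℝ → ℝ → ℝ≥0∞)
    (hp : ∀ ρ η, p ρ η = ∫⁻ τ in Set.Ioc (0 : ℝ) η,
        ENNReal.ofReal (gauss2D (Real.sqrt (2 * D * τ)) ρ * φ τ η))
    -- the observed density of bound particles at time `T`
    (dObs : ℝ × ℝ → ℝ≥0∞)
    (hdObs : ∀ r, dObs r = ∫⁻ ρ : ℝ × ℝ, ∫⁻ η in Set.Ioc (0 : ℝ) T,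
        ENNReal.ofReal (s (r - ρ) (T - η)) * p ρ η)
    -- the post adsorption-desorption source density rate (PSDR)
    (a : ℝ × ℝ → ℝ → ℝ≥0∞)
    (ha : ∀ ρ σ, a ρ σ = ENNReal.ofReal (σ / D) *
        ∫⁻ η in Set.Ioc (σ ^ 2 / (2 * D)) T,
          ENNReal.ofReal (s ρ (T - η) * φ (σ ^ 2 / (2 * D)) η))
    (r : ℝ × ℝ) :
    dObs r =
      ∫⁻ σ in Set.Ioc (0 : ℝ) (Real.sqrt (2 * D * T)), ∫⁻ ρ : ℝ × ℝ,
        ENNReal.ofReal (gauss2D σ (r - ρ)) * a ρ σ := by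
  calc dObs r = ∫⁻ ρ, ∫⁻ η in Ioc 0 T, ENNReal.ofReal (s ρ (T - η)) * p (r - ρ) η := by
        rw [hdObs, ← lintegral_sub_left_eq_self _ r]
        simp only [_root_.sub_sub_cancel]
    _ = ∫⁻ τ in Ioc 0 T, ∫⁻ ρ, ∫⁻ η in Ioc τ T, observationIntegrand D T s φ r ρ η τ := by
        simp_rw [lintegral_source_mul_green_eq hs_meas hφ_meas hp r]
        exact lintegral_lintegral_swap <|
          ((measurable_observationIntegrand hs_meas hφ_meas r).setLIntegral_Ioc
            measurable_snd T).aemeasurable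
    _ = ∫⁻ σ in Ioc 0 √(2 * D * T), ENNReal.ofReal (σ / D) * ∫⁻ ρ,
          ∫⁻ η in Ioc (σ ^ 2 / (2 * D)) T, observationIntegrand D T s φ r ρ η (σ ^ 2 / (2 * D)) :=
        lintegral_Ioc_eq_lintegral_sq_div hD T _
    _ = _ := by
        refine setLIntegral_congr_fun measurableSet_Ioc fun σ hσ => ?_
        rw [← lintegral_const_mul' _ _ ofReal_ne_top]
        exact lintegral_congr fun ρ =>
          lintegral_observationIntegrand_sq_div hD hs_nonneg ha r ρ hσ.1.le

/-- Observation model: the density `d_obs` of bound particles at imaging time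
`T`, given by the spatio-temporal convolution of the source density rate `s` with the Green
function `p(ρ,η) = ∫_0^η g_{√(2Dτ)}(ρ) φ(τ,η) dτ`, satisfies
`d_obs(r) = ∫_0^{σ_max} (G_σ a(·,σ))(r) dσ` with `σ_max = √(2DT)` and PSDR
`a(ρ,σ) = (σ/D) ∫_{σ²/(2D)}^T s(ρ, T−η) φ(σ²/(2D), η) dη`, with equality in `[0,∞]`. -/
theorem observation_model (D T : ℝ) (hD : 0 < D) (hT : 0 < T)
    (s : ℝ × ℝ → ℝ → ℝ) (φ : ℝ → ℝ → ℝ)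
    (hs_meas : Measurable (Function.uncurry s)) (hφ_meas : Measurable (Function.uncurry φ))
    (hs_nonneg : ∀ ρ t, 0 ≤ s ρ t) (hφ_nonneg : ∀ τ η, 0 ≤ φ τ η)
    -- the Green function of the surface density
    (p : ℝ × ℝ → ℝ → ℝ≥0∞)
    (hp : ∀ ρ η, p ρ η = ∫⁻ τ in Set.Ioc (0 : ℝ) η,
        ENNReal.ofReal (gauss2D (Real.sqrt (2 * D * τ)) ρ * φ τ η))
    -- the observed density of bound particles at time `T`
    (dObs : ℝ × ℝ → ℝ≥0∞)
    (hdObs : ∀ r, dObs r = ∫⁻ ρ : ℝ × ℝ, ∫⁻ η in Set.Ioc (0 : ℝ) T,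
        ENNReal.ofReal (s (r - ρ) (T - η)) * p ρ η)
    -- the post adsorption-desorption source density rate (PSDR)
    (a : ℝ × ℝ → ℝ → ℝ≥0∞)
    (ha : ∀ ρ σ, a ρ σ = ENNReal.ofReal (σ / D) *
        ∫⁻ η in Set.Ioc (σ ^ 2 / (2 * D)) T,
          ENNReal.ofReal (s ρ (T - η) * φ (σ ^ 2 / (2 * D)) η))
    (r : ℝ × ℝ) :
    dObs r =
      ∫⁻ σ in Set.Ioc (0 : ℝ) (Real.sqrt (2 * D * T)), ∫⁻ ρ : ℝ × ℝ,
        ENNReal.ofReal (gauss2D σ (r - ρ)) * a ρ σ :=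
  observation_model_general D T hD s φ hs_meas hφ_meas hs_nonneg p hp dObs hdObs a ha r
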